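/- arXiv:2510.18441 — 7 statements merged into one kernel-verified Lean document; each statement's English description precedes it below -/
import Mathlib

section
/- Let Y be hypergeometrically (N,K,m)-distributed, i.e., P(Y = j) = C(K,j)·C(N−K, m−j)/C(N,m), where K, m ≤ N. Then for every integer y with 0 ≤ y ≤ min(m,K), the upper tail satisfies P(Y ≥ y) = Σ_{j=y}^{min(m,K)} C(K,j)·C(N−K,m−j)/C(N,m) ≤ (K/N)^y · C(m,y). -/
lemma descFactorial_mul_pow_le (N K : ℕ) (hK : K ≤ N) :
    ∀ y : ℕ, K.descFactorial y * N ^ y ≤ K ^ y * N.descFactorial y := by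
  intro y
  induction y with
  | zero => simp
  | succ y ih =>
    rw [Nat.descFactorial_succ, Nat.descFactorial_succ, pow_succ, pow_succ]
    have h1 : (K - y) * N ≤ K * (N - y) := by
      rw [Nat.sub_mul, Nat.mul_sub, Nat.mul_comm K y]
      exact Nat.sub_le_sub_left (Nat.mul_le_mul_left y hK) _
    calc (K - y) * K.descFactorial y * (N ^ y * N)
        = ((K - y) * N) * (K.descFactorial y * N ^ y) := by ring
      _ ≤ (K * (N - y)) * (K ^ y * N.descFactorial y) := Nat.mul_le_mul h1 ih
      _ = K ^ y * K * ((N - y) * N.descFactorial y) := by ring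

lemma choose_mul_pow_le (N K y : ℕ) (hK : K ≤ N) :
    K.choose y * N ^ y ≤ K ^ y * N.choose y := by
  have h := descFactorial_mul_pow_le N K hK y
  rw [Nat.descFactorial_eq_factorial_mul_choose, Nat.descFactorial_eq_factorial_mul_choose] at h
  have hy : 0 < Nat.factorial y := Nat.factorial_pos y
  refine Nat.le_of_mul_le_mul_left ?_ hy
  calc Nat.factorial y * (K.choose y * N ^ y) = Nat.factorial y * K.choose y * N ^ y := by ring
    _ ≤ K ^ y * (Nat.factorial y * N.choose y) := h
    _ = Nat.factorial y * (K ^ y * N.choose y) := by ring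

/-- Hypergeometric tail bound: for `K, m ≤ N` and `0 ≤ y ≤ min(m,K)`,
`Σ_{j=y}^{min(m,K)} C(K,j)·C(N−K,m−j) / C(N,m) ≤ (K/N)^y · C(m,y)`,
stated in the denominator-cleared form. -/
theorem hypergeometric_tail_bound (N K m y : ℕ) (hK : K ≤ N) (hm : m ≤ N)
    (hy : y ≤ min m K) :
    (∑ j ∈ Finset.Icc y (min m K), Nat.choose K j * Nat.choose (N - K) (m - j)) * N ^ y
      ≤ K ^ y * Nat.choose m y * Nat.choose N m := by
  set M := min m K with hM
  have hym : y ≤ m := le_trans hy (min_le_left _ _)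
  have hyK : y ≤ K := le_trans hy (min_le_right _ _)
  -- Step A+B: bound the sum by C(K,y) * C(N-y, m-y)
  have stepA : ∀ j ∈ Finset.Icc y M,
      K.choose j * (N - K).choose (m - j)
        ≤ K.choose y * ((K - y).choose (j - y) * (N - K).choose (m - j)) := by
    intro j hj
    simp only [Finset.mem_Icc] at hj
    have hjK : j ≤ K := le_trans hj.2 (min_le_right _ _)
    have hid := Nat.choose_mul (n := K) hj.1
    have h1 : K.choose j ≤ K.choose y * (K - y).choose (j - y) := by
      calc K.choose j = K.choose j * 1 := by ring
        _ ≤ K.choose j * j.choose y := by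
            exact Nat.mul_le_mul_left _ (Nat.choose_pos hj.1)
        _ = K.choose y * (K - y).choose (j - y) := hid
    calc K.choose j * (N - K).choose (m - j)
        ≤ K.choose y * (K - y).choose (j - y) * (N - K).choose (m - j) :=
          Nat.mul_le_mul_right _ h1
      _ = K.choose y * ((K - y).choose (j - y) * (N - K).choose (m - j)) := by ring
  have stepB : (∑ j ∈ Finset.Icc y M, (K - y).choose (j - y) * (N - K).choose (m - j))
      ≤ (N - y).choose (m - y) := by
    have hV : (N - y).choose (m - y)
        = ∑ ij ∈ Finset.HasAntidiagonal.antidiagonal (m - y), (K - y).choose ij.1 * (N - K).choose ij.2 := by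
      have : N - y = (K - y) + (N - K) := by omega
      rw [this, Nat.add_choose_eq]
    rw [hV]
    have hinj : ∀ a ∈ Finset.Icc y M, ∀ b ∈ Finset.Icc y M,
        (fun j => (j - y, m - j)) a = (fun j => (j - y, m - j)) b → a = b := by
      intro a ha b hb hab
      simp only [Finset.mem_Icc] at ha hb
      simp only [Prod.mk.injEq] at hab
      omega
    rw [← Finset.sum_image (f := fun p : ℕ × ℕ => (K - y).choose p.1 * (N - K).choose p.2)
      hinj]
    apply Finset.sum_le_sum_of_subset
    intro p hp
    simp only [Finset.mem_image, Finset.mem_Icc] at hp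
    obtain ⟨j, ⟨hj1, hj2⟩, rfl⟩ := hp
    have hjm : j ≤ m := le_trans hj2 (min_le_left _ _)
    simp only [Finset.HasAntidiagonal.mem_antidiagonal]
    omega
  have step1 : (∑ j ∈ Finset.Icc y M, K.choose j * (N - K).choose (m - j))
      ≤ K.choose y * (N - y).choose (m - y) := by
    calc (∑ j ∈ Finset.Icc y M, K.choose j * (N - K).choose (m - j))
        ≤ ∑ j ∈ Finset.Icc y M,
            K.choose y * ((K - y).choose (j - y) * (N - K).choose (m - j)) :=
          Finset.sum_le_sum stepA
      _ = K.choose y * ∑ j ∈ Finset.Icc y M, (K - y).choose (j - y) * (N - K).choose (m - j) :=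
          (Finset.mul_sum _ _ _).symm
      _ ≤ K.choose y * (N - y).choose (m - y) := Nat.mul_le_mul_left _ stepB
  have hid2 : N.choose m * m.choose y = N.choose y * (N - y).choose (m - y) :=
    Nat.choose_mul (n := N) hym
  calc (∑ j ∈ Finset.Icc y M, K.choose j * (N - K).choose (m - j)) * N ^ y
      ≤ K.choose y * (N - y).choose (m - y) * N ^ y := Nat.mul_le_mul_right _ step1
    _ = (K.choose y * N ^ y) * (N - y).choose (m - y) := by ring
    _ ≤ (K ^ y * N.choose y) * (N - y).choose (m - y) :=
        Nat.mul_le_mul_right _ (choose_mul_pow_le N K y hK)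
    _ = K ^ y * (N.choose y * (N - y).choose (m - y)) := by ring
    _ = K ^ y * (N.choose m * m.choose y) := by rw [hid2]
    _ = K ^ y * m.choose y * N.choose m := by ring
end

section
/- The combinatorial identity underlying the hypergeometric tail bound: for integers y ≤ j ≤ min(m,K) ≤ N, one has C(K,j)·C(N−K,m−j)/C(N,m) = [C(K,y)·C(m,y)/C(N,y)] · [1/C(j,y)] · [C(K−y, j−y)·C(N−K, m−j)/C(N−y, m−y)]. -/
/-- The combinatorial identity underlying the hypergeometric tail bound:
for `y ≤ j ≤ min(m,K)` and `m, K ≤ N`,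
`C(K,j)·C(N−K,m−j)/C(N,m)
  = [C(K,y)·C(m,y)/C(N,y)] · [1/C(j,y)] · [C(K−y,j−y)·C(N−K,m−j)/C(N−y,m−y)]`,
stated in the denominator-cleared form. -/
theorem hypergeometric_term_identity (N K m y j : ℕ) (hyj : y ≤ j) (hjm : j ≤ m)
    (hjK : j ≤ K) (hmN : m ≤ N) (hKN : K ≤ N) :
    Nat.choose K j * Nat.choose (N - K) (m - j) *
        (Nat.choose N y * Nat.choose j y * Nat.choose (N - y) (m - y))
      = Nat.choose K y * Nat.choose m y *
          (Nat.choose (K - y) (j - y) * Nat.choose (N - K) (m - j)) * Nat.choose N m := by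
  have h1 : Nat.choose K j * Nat.choose j y = Nat.choose K y * Nat.choose (K - y) (j - y) :=
    Nat.choose_mul hyj
  have h2 : Nat.choose N m * Nat.choose m y = Nat.choose N y * Nat.choose (N - y) (m - y) :=
    Nat.choose_mul (hyj.trans hjm)
  calc Nat.choose K j * Nat.choose (N - K) (m - j) *
        (Nat.choose N y * Nat.choose j y * Nat.choose (N - y) (m - y))
      = (Nat.choose K j * Nat.choose j y) * Nat.choose (N - K) (m - j) *
        (Nat.choose N y * Nat.choose (N - y) (m - y)) := by ring
    _ = (Nat.choose K y * Nat.choose (K - y) (j - y)) * Nat.choose (N - K) (m - j) *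
        (Nat.choose N m * Nat.choose m y) := by rw [h1, h2]
    _ = _ := by ring
end

section
/- Let M be a uniformly random m-element subset of an N-element set X, and let S₁, S₂ ⊆ X be disjoint sets of size K each (so 2K ≤ N). For i = 1,2 let Y_i = |S_i ∩ M|. Then for every nonnegative integer r, the indicators 1{Y₁ ≥ r} and 1{Y₂ ≥ r} are non-positively correlated: P(Y₁ ≥ r and Y₂ ≥ r) ≤ P(Y₁ ≥ r) · P(Y₂ ≥ r). -/
open Finset

/-- Double counting: adding one more sampled element. -/
lemma step_count {α : Type*} [DecidableEq α] (Y S : Finset α) (r s : ℕ) :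
    (Y.card - s) * ((Y.powersetCard s).filter (fun M => r ≤ (S ∩ M).card)).card
      ≤ (s + 1) * ((Y.powersetCard (s+1)).filter (fun M => r ≤ (S ∩ M).card)).card := by
  classical
  set G : ℕ → Finset (Finset α) :=
    fun t => (Y.powersetCard t).filter (fun M => r ≤ (S ∩ M).card) with hG
  have hL : ((G s).sigma (fun M => Y \ M)).card = (Y.card - s) * (G s).card := by
    rw [Finset.card_sigma]
    have h : ∀ M ∈ G s, (Y \ M).card = Y.card - s := by
      intro M hM
      simp only [hG, Finset.mem_filter, Finset.mem_powersetCard] at hM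
      rw [Finset.card_sdiff_of_subset hM.1.1, hM.1.2]
    rw [Finset.sum_congr rfl h, Finset.sum_const, smul_eq_mul, mul_comm]
  have hR : ((G (s+1)).sigma (fun M => M)).card = (s + 1) * (G (s+1)).card := by
    rw [Finset.card_sigma]
    have h : ∀ M ∈ G (s+1), M.card = s + 1 := by
      intro M hM
      simp only [hG, Finset.mem_filter, Finset.mem_powersetCard] at hM
      exact hM.1.2
    rw [Finset.sum_congr rfl h, Finset.sum_const, smul_eq_mul, mul_comm]
  rw [← hL, ← hR]
  apply Finset.card_le_card_of_injOn (fun p => ⟨insert p.2 p.1, p.2⟩)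
  · rintro ⟨M, x⟩ hp
    simp only [Finset.mem_coe, Finset.mem_sigma] at hp
    obtain ⟨hMg, hx⟩ := hp
    rw [Finset.mem_sdiff] at hx
    simp only [hG, Finset.mem_filter, Finset.mem_powersetCard] at hMg
    simp only [Finset.mem_coe, Finset.mem_sigma]
    refine ⟨?_, Finset.mem_insert_self _ _⟩
    simp only [hG, Finset.mem_filter, Finset.mem_powersetCard]
    refine ⟨⟨Finset.insert_subset hx.1 hMg.1.1, ?_⟩, ?_⟩
    · rw [Finset.card_insert_of_notMem hx.2, hMg.1.2]
    · exact hMg.2.trans (Finset.card_le_card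
        (Finset.inter_subset_inter le_rfl (Finset.subset_insert _ _)))
  · rintro ⟨M, x⟩ hp ⟨M', x'⟩ hp' h
    simp only [Finset.mem_coe, Finset.mem_sigma] at hp hp'
    simp only [Sigma.mk.inj_iff, heq_eq_eq] at h
    obtain ⟨h1, h2⟩ := h
    subst h2
    have hxM : x ∉ M := (Finset.mem_sdiff.mp hp.2).2
    have hxM' : x ∉ M' := (Finset.mem_sdiff.mp hp'.2).2
    have : M = M' := by
      have := congrArg (Finset.erase · x) h1
      simpa [Finset.erase_insert hxM, Finset.erase_insert hxM'] using this
    simp [this]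

/-- The proportion of `s`-subsets hitting `S` at least `r` times is monotone in `s`
(denominator-cleared form). -/
lemma ratio_mono {α : Type*} [DecidableEq α] (Y S : Finset α) (r : ℕ) :
    ∀ s' s, s ≤ s' →
    ((Y.powersetCard s).filter (fun M => r ≤ (S ∩ M).card)).card * (Y.powersetCard s').card
      ≤ (Y.powersetCard s).card *
        ((Y.powersetCard s').filter (fun M => r ≤ (S ∩ M).card)).card := by
  classical
  intro s'
  induction s' with
  | zero => intro s hs; interval_cases s; rw [mul_comm]
  | succ s' ih =>
    intro s hs
    rcases Nat.lt_or_ge s (s'+1) with h | h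
    · have hs' : s ≤ s' := Nat.lt_succ_iff.mp h
      set B : ℕ → ℕ :=
        fun t => ((Y.powersetCard t).filter (fun M => r ≤ (S ∩ M).card)).card with hB
      set A : ℕ → ℕ := fun t => (Y.powersetCard t).card with hA
      have hid : A (s'+1) * (s'+1) = A s' * (Y.card - s') := by
        simp only [hA, Finset.card_powersetCard]
        exact Nat.choose_succ_right_eq _ _
      have key : (s'+1) * (B s * A (s'+1)) ≤ (s'+1) * (A s * B (s'+1)) := by
        calc (s'+1) * (B s * A (s'+1)) = B s * (A (s'+1) * (s'+1)) := by ring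
          _ = B s * A s' * (Y.card - s') := by rw [hid]; ring
          _ ≤ A s * B s' * (Y.card - s') := Nat.mul_le_mul_right _ (ih s hs')
          _ = A s * ((Y.card - s') * B s') := by ring
          _ ≤ A s * ((s'+1) * B (s'+1)) := Nat.mul_le_mul_left _ (step_count Y S r s')
          _ = (s'+1) * (A s * B (s'+1)) := by ring
      exact Nat.le_of_mul_le_mul_left key (Nat.succ_pos _)
    · have : s = s' + 1 := le_antisymm hs h
      subst this
      rw [mul_comm]

/-- Factorization of the fiber `{M : |M∩S₁| = a}` through `(M ∩ S₁, M \ S₁)`. -/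
lemma card_fiber {X : Type*} [Fintype X] [DecidableEq X] (S₁ S₂ : Finset X)
    (hd : Disjoint S₁ S₂) (m a : ℕ) (ha : a ≤ m) (P : ℕ → Prop) [DecidablePred P] :
    (((Finset.univ : Finset X).powersetCard m).filter
        (fun M => (S₁ ∩ M).card = a ∧ P ((S₂ ∩ M).card))).card
      = (S₁.powersetCard a).card *
        ((S₁ᶜ.powersetCard (m - a)).filter (fun M => P ((S₂ ∩ M).card))).card := by
  classical
  rw [← Finset.card_product]
  apply Finset.card_nbij' (fun M => (M ∩ S₁, M \ S₁)) (fun p => p.1 ∪ p.2)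
  · intro M hM
    simp only [Finset.mem_coe, Finset.mem_filter, Finset.mem_powersetCard] at hM
    obtain ⟨⟨-, hMc⟩, hMa, hMP⟩ := hM
    have hcap : (M ∩ S₁).card = a := by rw [Finset.inter_comm]; exact hMa
    have hsd : (M \ S₁).card = m - a := by
      have := Finset.card_inter_add_card_sdiff M S₁
      omega
    have hS2 : S₂ ∩ (M \ S₁) = S₂ ∩ M := by
      ext x
      simp only [Finset.mem_inter, Finset.mem_sdiff]
      constructor
      · tauto
      · intro ⟨hx2, hxM⟩
        exact ⟨hx2, hxM, fun hx1 => (Finset.disjoint_left.mp hd) hx1 hx2⟩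
    simp only [Finset.mem_coe, Finset.mem_product, Finset.mem_filter, Finset.mem_powersetCard]
    refine ⟨⟨Finset.inter_subset_right, hcap⟩, ⟨?_, hsd⟩, by rwa [hS2]⟩
    · intro x hx
      rw [Finset.mem_compl]
      exact (Finset.mem_sdiff.mp hx).2
  · intro p hp
    simp only [Finset.mem_coe, Finset.mem_product, Finset.mem_filter, Finset.mem_powersetCard] at hp
    obtain ⟨⟨hT1, hTa⟩, ⟨hU1, hUc⟩, hUP⟩ := hp
    have hdis : Disjoint p.1 p.2 := by
      rw [Finset.disjoint_left]
      intro x hx hx'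
      exact (Finset.mem_compl.mp (hU1 hx')) (hT1 hx)
    have hS1T : S₁ ∩ (p.1 ∪ p.2) = p.1 := by
      ext x
      simp only [Finset.mem_inter, Finset.mem_union]
      constructor
      · rintro ⟨hx1, hx | hx⟩
        · exact hx
        · exact absurd hx1 (Finset.mem_compl.mp (hU1 hx))
      · intro hx; exact ⟨hT1 hx, Or.inl hx⟩
    have hS2U : S₂ ∩ (p.1 ∪ p.2) = S₂ ∩ p.2 := by
      ext x
      simp only [Finset.mem_inter, Finset.mem_union]
      constructor
      · rintro ⟨hx2, hx | hx⟩
        · exact absurd hx2 (Finset.disjoint_left.mp hd (hT1 hx))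
        · exact ⟨hx2, hx⟩
      · tauto
    simp only [Finset.mem_coe, Finset.mem_filter, Finset.mem_powersetCard]
    refine ⟨⟨Finset.subset_univ _, ?_⟩, by rw [hS1T]; exact hTa, by rw [hS2U]; exact hUP⟩
    rw [Finset.card_union_of_disjoint hdis, hTa, hUc]
    omega
  · intro M hM
    ext x
    simp only [Finset.mem_union, Finset.mem_inter, Finset.mem_sdiff]
    tauto
  · intro p hp
    simp only [Finset.mem_coe, Finset.mem_product, Finset.mem_filter, Finset.mem_powersetCard] at hp
    obtain ⟨⟨hT1, -⟩, ⟨hU1, -⟩, -⟩ := hp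
    have h1 : (p.1 ∪ p.2) ∩ S₁ = p.1 := by
      ext x
      simp only [Finset.mem_inter, Finset.mem_union]
      constructor
      · rintro ⟨hx | hx, hx1⟩
        · exact hx
        · exact absurd hx1 (Finset.mem_compl.mp (hU1 hx))
      · intro hx; exact ⟨Or.inl hx, hT1 hx⟩
    have h2 : (p.1 ∪ p.2) \ S₁ = p.2 := by
      ext x
      simp only [Finset.mem_sdiff, Finset.mem_union]
      constructor
      · rintro ⟨hx | hx, hx1⟩
        · exact absurd (hT1 hx) hx1
        · exact hx
      · intro hx; exact ⟨Or.inr hx, Finset.mem_compl.mp (hU1 hx)⟩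
    show ((p.1 ∪ p.2) ∩ S₁, (p.1 ∪ p.2) \ S₁) = p
    rw [h1, h2]

/-- Negative correlation for disjoint hypergeometric counts: if `M` is a uniformly random
`m`-element subset of an `N`-element set `X` and `S₁, S₂ ⊆ X` are disjoint `K`-element sets,
then with `Yᵢ = |Sᵢ ∩ M|` we have `P(Y₁ ≥ r ∧ Y₂ ≥ r) ≤ P(Y₁ ≥ r)·P(Y₂ ≥ r)`,
stated in counting (denominator-cleared) form over all `m`-subsets `M`. -/
theorem disjoint_hypergeometric_neg_correlated {X : Type*} [Fintype X] [DecidableEq X]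
    (N K m r : ℕ) (hN : Fintype.card X = N) (hm : m ≤ N)
    (S₁ S₂ : Finset X) (hd : Disjoint S₁ S₂) (h1 : S₁.card = K) (h2 : S₂.card = K) :
    (((Finset.univ : Finset X).powersetCard m).filter
        (fun M => r ≤ (S₁ ∩ M).card ∧ r ≤ (S₂ ∩ M).card)).card *
      ((Finset.univ : Finset X).powersetCard m).card
      ≤ (((Finset.univ : Finset X).powersetCard m).filter (fun M => r ≤ (S₁ ∩ M).card)).card *
        (((Finset.univ : Finset X).powersetCard m).filter (fun M => r ≤ (S₂ ∩ M).card)).card := by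
  classical
  set Ω : Finset (Finset X) := (Finset.univ : Finset X).powersetCard m with hΩdef
  set ω : ℕ → ℕ := fun a => (Ω.filter (fun M => (S₁ ∩ M).card = a)).card with hωdef
  set β : ℕ → ℕ :=
    fun a => (Ω.filter (fun M => (S₁ ∩ M).card = a ∧ r ≤ (S₂ ∩ M).card)).card with hβdef
  set u : Finset ℕ := Finset.range (K + 1) with hudef
  have hmem : ∀ M ∈ Ω, (S₁ ∩ M).card ∈ u := by
    intro M _
    rw [hudef, Finset.mem_range, Nat.lt_succ_iff, ← h1]
    exact Finset.card_le_card Finset.inter_subset_left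
  -- fiberwise decompositions
  have hΩ : Ω.card = ∑ a ∈ u, ω a :=
    Finset.card_eq_sum_card_fiberwise hmem
  have hB : (Ω.filter (fun M => r ≤ (S₂ ∩ M).card)).card = ∑ a ∈ u, β a := by
    rw [Finset.card_eq_sum_card_fiberwise
      (fun M hM => hmem M (Finset.mem_filter.mp hM).1)]
    refine Finset.sum_congr rfl fun a _ => ?_
    rw [hβdef, Finset.filter_filter]
    congr 1
    ext M
    simp only [Finset.mem_filter]
    tauto
  have hA : (Ω.filter (fun M => r ≤ (S₁ ∩ M).card)).card
      = ∑ a ∈ u, if r ≤ a then ω a else 0 := by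
    rw [Finset.card_eq_sum_card_fiberwise
      (fun M hM => hmem M (Finset.mem_filter.mp hM).1)]
    refine Finset.sum_congr rfl fun a _ => ?_
    rw [Finset.filter_filter]
    by_cases hra : r ≤ a
    · rw [if_pos hra, hωdef]
      congr 1
      ext M
      simp only [Finset.mem_filter]
      constructor
      · rintro ⟨hM, -, hfa⟩; exact ⟨hM, hfa⟩
      · rintro ⟨hM, hfa⟩; exact ⟨hM, hra.trans_eq hfa.symm, hfa⟩
    · rw [if_neg hra, Finset.card_eq_zero, Finset.filter_eq_empty_iff]
      intro M _ h
      exact hra (h.2 ▸ h.1)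
  have hAB : (Ω.filter (fun M => r ≤ (S₁ ∩ M).card ∧ r ≤ (S₂ ∩ M).card)).card
      = ∑ a ∈ u, if r ≤ a then β a else 0 := by
    rw [Finset.card_eq_sum_card_fiberwise
      (fun M hM => hmem M (Finset.mem_filter.mp hM).1)]
    refine Finset.sum_congr rfl fun a _ => ?_
    rw [Finset.filter_filter]
    by_cases hra : r ≤ a
    · rw [if_pos hra, hβdef]
      congr 1
      ext M
      simp only [Finset.mem_filter]
      constructor
      · rintro ⟨hM, ⟨-, hr2⟩, hfa⟩; exact ⟨hM, hfa, hr2⟩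
      · rintro ⟨hM, hfa, hr2⟩; exact ⟨hM, ⟨hra.trans_eq hfa.symm, hr2⟩, hfa⟩
    · rw [if_neg hra, Finset.card_eq_zero, Finset.filter_eq_empty_iff]
      intro M _ h
      exact hra (h.2 ▸ h.1.1)
  -- the key pointwise inequality
  have key : ∀ a a', a' ≤ a → β a * ω a' ≤ ω a * β a' := by
    intro a a' haa
    by_cases ha : a ≤ m
    · have ha' : a' ≤ m := haa.trans ha
      have hω' : ∀ b, b ≤ m → ω b
          = (S₁.powersetCard b).card * (S₁ᶜ.powersetCard (m - b)).card := by
        intro b hb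
        have := card_fiber S₁ S₂ hd m b hb (fun _ => True)
        simpa [hωdef, hΩdef] using this
      have hβ' : ∀ b, b ≤ m → β b
          = (S₁.powersetCard b).card *
            ((S₁ᶜ.powersetCard (m - b)).filter (fun M => r ≤ (S₂ ∩ M).card)).card := by
        intro b hb
        exact card_fiber S₁ S₂ hd m b hb (fun n => r ≤ n)
      rw [hω' a ha, hω' a' ha', hβ' a ha, hβ' a' ha']
      have hk := ratio_mono S₁ᶜ S₂ r (m - a') (m - a) (by omega)
      calc (S₁.powersetCard a).card *
            ((S₁ᶜ.powersetCard (m - a)).filter (fun M => r ≤ (S₂ ∩ M).card)).card *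
            ((S₁.powersetCard a').card * (S₁ᶜ.powersetCard (m - a')).card)
          = ((S₁.powersetCard a).card * (S₁.powersetCard a').card) *
            (((S₁ᶜ.powersetCard (m - a)).filter (fun M => r ≤ (S₂ ∩ M).card)).card *
              (S₁ᶜ.powersetCard (m - a')).card) := by ring
        _ ≤ ((S₁.powersetCard a).card * (S₁.powersetCard a').card) *
            ((S₁ᶜ.powersetCard (m - a)).card *
              ((S₁ᶜ.powersetCard (m - a')).filter (fun M => r ≤ (S₂ ∩ M).card)).card) :=
            Nat.mul_le_mul_left _ hk
        _ = (S₁.powersetCard a).card * (S₁ᶜ.powersetCard (m - a)).card *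
            ((S₁.powersetCard a').card *
              ((S₁ᶜ.powersetCard (m - a')).filter (fun M => r ≤ (S₂ ∩ M).card)).card) := by
            ring
    · have hz : β a = 0 := by
        rw [hβdef, Finset.card_eq_zero, Finset.filter_eq_empty_iff]
        intro M hM h
        have heq := h.1
        rw [hΩdef, Finset.mem_powersetCard] at hM
        have : (S₁ ∩ M).card ≤ m := hM.2 ▸ Finset.card_le_card Finset.inter_subset_right
        omega
      simp [hz]
  -- put everything together
  rw [hΩ, hA, hB, hAB]
  rw [← Finset.sum_filter (fun a => r ≤ a) β, ← Finset.sum_filter (fun a => r ≤ a) ω]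
  rw [← Finset.sum_filter_add_sum_filter_not u (fun a => r ≤ a) ω,
    ← Finset.sum_filter_add_sum_filter_not u (fun a => r ≤ a) β]
  set s := u.filter (fun a => r ≤ a) with hsdef
  set t := u.filter (fun a => ¬ r ≤ a) with htdef
  have hst : (∑ a ∈ s, β a) * (∑ a' ∈ t, ω a') ≤ (∑ a ∈ s, ω a) * (∑ a' ∈ t, β a') := by
    rw [Finset.sum_mul_sum, Finset.sum_mul_sum]
    refine Finset.sum_le_sum fun a ha => Finset.sum_le_sum fun a' ha' => ?_
    rw [hsdef, Finset.mem_filter] at ha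
    rw [htdef, Finset.mem_filter] at ha'
    exact key a a' (by omega)
  nlinarith [hst]
end

section
/- Let H be a k-uniform hypergraph on vertex set X and r ≥ 1 an integer; let g = (1/r)·1_H. Suppose S ⊆ X satisfies Σ_{T ⊆ S} g(T) ≥ 1 (i.e., S contains at least r edges of H), but S does not contain ⌈r/2⌉ pairwise disjoint edges of H. Then there is a set U ⊆ H of r edges all contained in S whose union has size at most r·k − ⌈r/2⌉. -/
open Finset

/-- Let `H` be a `k`-uniform hypergraph on `X` and `r ≥ 1`. If `S ⊆ X` contains at least
`r` edges of `H` but does not contain `⌈r/2⌉` pairwise disjoint edges of `H`, then there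
is a set `U` of `r` edges of `H`, all contained in `S`, whose union has size at most
`r·k − ⌈r/2⌉`. (Here `⌈r/2⌉ = (r+1)/2` in natural-number arithmetic.) -/
theorem exists_r_edges_small_union {X : Type*} [Fintype X] [DecidableEq X]
    (k r : ℕ) (hk : 1 ≤ k) (hr : 1 ≤ r)
    (H : Finset (Finset X)) (hH : ∀ T ∈ H, T.card = k) (S : Finset X)
    (hmany : r ≤ (H.filter (fun T => T ⊆ S)).card)
    (hnomatch : ¬ ∃ D ⊆ H.filter (fun T => T ⊆ S), D.card = (r + 1) / 2 ∧
        (D : Set (Finset X)).Pairwise (fun a b => Disjoint a b)) :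
    ∃ U ⊆ H, U.card = r ∧ (∀ T ∈ U, T ⊆ S) ∧ (U.sup id).card ≤ r * k - (r + 1) / 2 := by
  classical
  set F := H.filter (fun T => T ⊆ S) with hF
  obtain ⟨U, hUF, hUcard⟩ := Finset.exists_subset_card_eq hmany
  have hUH : U ⊆ H := hUF.trans (filter_subset _ _)
  have hUS : ∀ T ∈ U, T ⊆ S := fun T hT => (mem_filter.mp (hUF hT)).2
  -- the family of pairwise-disjoint subfamilies of U
  set s := U.powerset.filter
      (fun D => ∀ a ∈ D, ∀ b ∈ D, a ≠ b → Disjoint a b) with hs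
  have hsne : s.Nonempty := ⟨∅, by simp [hs]⟩
  obtain ⟨M, hMs, hMmax⟩ := Finset.exists_max_image s Finset.card hsne
  have hMU : M ⊆ U := mem_powerset.mp (mem_filter.mp hMs).1
  have hMdisj : ∀ a ∈ M, ∀ b ∈ M, a ≠ b → Disjoint a b := (mem_filter.mp hMs).2
  -- M has fewer than (r+1)/2 elements
  have hMlt : M.card < (r + 1) / 2 := by
    by_contra h
    push_neg at h
    obtain ⟨D, hDM, hDcard⟩ := Finset.exists_subset_card_eq h
    exact hnomatch ⟨D, (hDM.trans hMU).trans hUF, hDcard,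
      fun a ha b hb hab => hMdisj a (hDM ha) b (hDM hb) hab⟩
  -- every edge of U \ M meets the union W of M
  set W := M.sup id with hW
  have hmeet : ∀ T ∈ U \ M, ¬ Disjoint T W := by
    intro T hT hdisj
    have hTU := (mem_sdiff.mp hT).1
    have hTM := (mem_sdiff.mp hT).2
    have hins : insert T M ∈ s := by
      refine mem_filter.mpr ⟨mem_powerset.mpr ?_, ?_⟩
      · exact insert_subset hTU hMU
      · intro a ha b hb hab
        rcases mem_insert.mp ha with rfl | ha'
        · rcases mem_insert.mp hb with rfl | hb'
          · exact absurd rfl hab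
          · exact hdisj.mono_right (le_sup (f := id) hb')
        · rcases mem_insert.mp hb with rfl | hb'
          · exact (hdisj.mono_right (le_sup (f := id) ha')).symm
          · exact hMdisj a ha' b hb' hab
    have := hMmax _ hins
    rw [card_insert_of_notMem hTM] at this
    omega
  -- each T in U \ M has T \ W of card ≤ k - 1
  have hsmall : ∀ T ∈ U \ M, (T \ W).card ≤ k - 1 := by
    intro T hT
    have hTU := (mem_sdiff.mp hT).1
    have hk' : T.card = k := hH T (hUH hTU)
    have hne : (T ∩ W).Nonempty := by
      rw [← not_disjoint_iff_nonempty_inter]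
      exact hmeet T hT
    have h1 : 1 ≤ (T ∩ W).card := card_pos.mpr hne
    have h2 : (T \ W).card + (T ∩ W).card = T.card := by
      rw [card_sdiff_add_card_inter]
    omega
  -- bound on the union
  have hsub : U.sup id \ W ⊆ (U \ M).biUnion (fun T => T \ W) := by
    intro x hx
    obtain ⟨hx1, hx2⟩ := mem_sdiff.mp hx
    obtain ⟨T, hTU, hxT⟩ := mem_sup.mp hx1
    rcases em (T ∈ M) with hTM | hTM
    · exact absurd (mem_sup.mpr ⟨T, hTM, hxT⟩) hx2
    · exact mem_biUnion.mpr ⟨T, mem_sdiff.mpr ⟨hTU, hTM⟩, mem_sdiff.mpr ⟨hxT, hx2⟩⟩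
  have hWcard : W.card ≤ M.card * k := by
    calc W.card = (M.biUnion id).card := by rw [hW, sup_eq_biUnion]
    _ ≤ ∑ T ∈ M, (id T).card := card_biUnion_le
    _ = ∑ T ∈ M, k := by
        refine Finset.sum_congr rfl fun T hT => ?_
        exact hH T (hUH (hMU hT))
    _ = M.card * k := by rw [Finset.sum_const, smul_eq_mul]
  have hbound : (U.sup id).card ≤ M.card * k + (r - M.card) * (k - 1) := by
    have h1 : (U.sup id).card ≤ W.card + (U.sup id \ W).card := by
      have : U.sup id ⊆ W ∪ (U.sup id \ W) := by
        intro x hx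
        rcases em (x ∈ W) with h | h
        · exact mem_union_left _ h
        · exact mem_union_right _ (mem_sdiff.mpr ⟨hx, h⟩)
      calc (U.sup id).card ≤ (W ∪ (U.sup id \ W)).card := card_le_card this
      _ ≤ W.card + (U.sup id \ W).card := card_union_le _ _
    have h2 : (U.sup id \ W).card ≤ (U \ M).card * (k - 1) := by
      calc (U.sup id \ W).card ≤ ((U \ M).biUnion (fun T => T \ W)).card :=
            card_le_card hsub
      _ ≤ ∑ T ∈ U \ M, (T \ W).card := card_biUnion_le
      _ ≤ ∑ T ∈ U \ M, (k - 1) := Finset.sum_le_sum hsmall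
      _ = (U \ M).card * (k - 1) := by rw [Finset.sum_const, smul_eq_mul]
    have h3 : (U \ M).card = r - M.card := by
      rw [card_sdiff_of_subset hMU, hUcard]
    rw [h3] at h2
    omega
  refine ⟨U, hUH, hUcard, hUS, ?_⟩
  -- arithmetic
  have hmr : M.card ≤ r := by
    rw [← hUcard]; exact card_le_card hMU
  set m := M.card with hm
  have e1 : m * k + (r - m) * k = r * k := by
    rw [← Nat.add_mul]
    congr 1
    omega
  have e2 : (r - m) * (k - 1) + (r - m) = (r - m) * k := by
    have : (r - m) * (k - 1) + (r - m) * 1 = (r - m) * k := by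
      rw [← Nat.mul_add]
      congr 1
      omega
    omega
  generalize hA : m * k = A at *
  generalize hB : (r - m) * k = B at *
  generalize hC : (r - m) * (k - 1) = C at *
  omega
end

section
/- Let H be a k-uniform hypergraph on X with m edges, r ≤ m a positive integer, p = (r/m)^{1/k}, and L > 0. Define G₀ as the family of all unions of ⌈r/2⌉ pairwise disjoint edges of H. Then w(G₀, p/L) := Σ_{S ∈ G₀}(p/L)^{|S|} ≤ (2e/L)^{k·⌈r/2⌉}. -/
open Finset

/-- Weight of `G₀`: let `H` be a `k`-uniform hypergraph on `X` with `m` edges,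
`1 ≤ r ≤ m`, `p = (r/m)^{1/k}` and `L > 0`. If `G₀` is the family of all unions of
`⌈r/2⌉` pairwise disjoint edges of `H`, then
`w(G₀, p/L) = Σ_{S ∈ G₀} (p/L)^{|S|} ≤ (2e/L)^{k·⌈r/2⌉}`. -/
theorem weight_G0_bound {X : Type*} [Fintype X] [DecidableEq X]
    (k r m : ℕ) (hk : 1 ≤ k) (hr : 1 ≤ r) (hrm : r ≤ m) (L : ℝ) (hL : 0 < L)
    (H : Finset (Finset X)) (hHk : ∀ T ∈ H, T.card = k) (hHm : H.card = m) :
    ∑ S ∈ ((H.powersetCard ((r + 1) / 2)).filter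
          (fun U => ∀ a ∈ U, ∀ b ∈ U, a ≠ b → Disjoint a b)).image (fun U => U.sup id),
        (((r : ℝ) / m) ^ ((1 : ℝ) / k) / L) ^ S.card
      ≤ (2 * Real.exp 1 / L) ^ (k * ((r + 1) / 2)) := by
  set s := (r + 1) / 2 with hs
  set p : ℝ := ((r : ℝ) / m) ^ ((1 : ℝ) / k) with hp
  have hm1 : 1 ≤ m := le_trans hr hrm
  have hmpos : (0 : ℝ) < m := by exact_mod_cast Nat.lt_of_lt_of_le Nat.zero_lt_one hm1
  have hrm' : (0 : ℝ) ≤ (r : ℝ) / m := by positivity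
  have hppos : 0 ≤ p := Real.rpow_nonneg hrm' _
  have hspos : 1 ≤ s := by omega
  -- every element of the image has cardinality k * s
  have hcard : ∀ S ∈ ((H.powersetCard s).filter
      (fun U => ∀ a ∈ U, ∀ b ∈ U, a ≠ b → Disjoint a b)).image (fun U => U.sup id),
      S.card = k * s := by
    intro S hS
    obtain ⟨U, hU, rfl⟩ := mem_image.mp hS
    rw [mem_filter, mem_powersetCard] at hU
    obtain ⟨⟨hUH, hUcard⟩, hdisj⟩ := hU
    rw [sup_eq_biUnion, Finset.card_biUnion (t := id) hdisj]
    rw [Finset.sum_congr rfl (fun a ha => by simpa using hHk a (hUH ha))]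
    rw [sum_const, hUcard, smul_eq_mul, mul_comm]
  have key : ∑ S ∈ ((H.powersetCard s).filter
      (fun U => ∀ a ∈ U, ∀ b ∈ U, a ≠ b → Disjoint a b)).image (fun U => U.sup id),
      (p / L) ^ S.card
      = (((H.powersetCard s).filter
      (fun U => ∀ a ∈ U, ∀ b ∈ U, a ≠ b → Disjoint a b)).image (fun U => U.sup id)).card
        * (p / L) ^ (k * s) := by
    rw [Finset.sum_congr rfl (fun S hS => by rw [hcard S hS]), sum_const, nsmul_eq_mul]
  rw [key]
  -- bound the number of sets
  have hcount : ((((H.powersetCard s).filter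
      (fun U => ∀ a ∈ U, ∀ b ∈ U, a ≠ b → Disjoint a b)).image (fun U => U.sup id)).card : ℝ)
      ≤ (m.choose s : ℝ) := by
    have h1 := card_image_le (s := (H.powersetCard s).filter
      (fun U => ∀ a ∈ U, ∀ b ∈ U, a ≠ b → Disjoint a b)) (f := fun U => U.sup id)
    have h2 := card_filter_le (H.powersetCard s)
      (fun U => ∀ a ∈ U, ∀ b ∈ U, a ≠ b → Disjoint a b)
    have h3 : (H.powersetCard s).card = m.choose s := by
      rw [card_powersetCard, hHm]
    exact_mod_cast (h1.trans h2).trans_eq h3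
  have hpk : (p / L) ^ (k * s) = ((r : ℝ) / m) ^ s / L ^ (k * s) := by
    rw [div_pow]
    congr 1
    rw [hp, ← Real.rpow_natCast (((r : ℝ) / m) ^ ((1 : ℝ) / k)) (k * s),
      ← Real.rpow_mul hrm']
    have : (1 : ℝ) / k * (k * s : ℕ) = (s : ℕ) := by
      push_cast
      field_simp
    rw [this, Real.rpow_natCast]
  have hfin : (m.choose s : ℝ) * (((r : ℝ) / m) ^ s) ≤ (2 * Real.exp 1) ^ s := by
    have h1 : (m.choose s : ℝ) ≤ (m : ℝ) ^ s / (s.factorial : ℝ) :=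
      Nat.choose_le_pow_div s m
    have hfac : (0 : ℝ) < (s.factorial : ℝ) := by positivity
    have h2 : (m.choose s : ℝ) * (((r : ℝ) / m) ^ s)
        ≤ ((m : ℝ) ^ s / (s.factorial : ℝ)) * (((r : ℝ) / m) ^ s) := by
      apply mul_le_mul_of_nonneg_right h1 (by positivity)
    have h3 : ((m : ℝ) ^ s / (s.factorial : ℝ)) * (((r : ℝ) / m) ^ s)
        = (r : ℝ) ^ s / (s.factorial : ℝ) := by
      have hm0 : (m : ℝ) ≠ 0 := hmpos.ne'
      have hmr : (m : ℝ) * ((r : ℝ) / m) = r := by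
        rw [mul_comm]; exact div_mul_cancel₀ (r : ℝ) hm0
      rw [div_mul_eq_mul_div, ← mul_pow, hmr]
    have hr2s : (r : ℝ) ≤ 2 * s := by
      have : r ≤ 2 * s := by omega
      exact_mod_cast this
    have h4 : (r : ℝ) ^ s ≤ (2 * s : ℝ) ^ s :=
      pow_le_pow_left₀ (by positivity) hr2s s
    have h5 : ((s : ℝ)) ^ s / (s.factorial : ℝ) ≤ Real.exp s :=
      Real.pow_div_factorial_le_exp (x := (s:ℝ)) (by positivity) s
    have h6 : (r : ℝ) ^ s / (s.factorial : ℝ) ≤ 2 ^ s * ((s : ℝ) ^ s / (s.factorial : ℝ)) := by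
      rw [← mul_div_assoc, ← mul_pow]
      gcongr
    have h7 : (2 : ℝ) ^ s * ((s : ℝ) ^ s / (s.factorial : ℝ)) ≤ 2 ^ s * Real.exp s :=
      mul_le_mul_of_nonneg_left h5 (by positivity)
    have h8 : Real.exp (s : ℝ) = Real.exp 1 ^ s := by
      rw [← Real.exp_nat_mul, mul_one]
    calc (m.choose s : ℝ) * (((r : ℝ) / m) ^ s)
        ≤ (r : ℝ) ^ s / (s.factorial : ℝ) := h2.trans_eq h3
      _ ≤ 2 ^ s * Real.exp s := h6.trans h7
      _ = (2 * Real.exp 1) ^ s := by rw [h8, mul_pow]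
  have h2e : (1 : ℝ) ≤ 2 * Real.exp 1 := by
    nlinarith [Real.exp_one_gt_d9]
  have hmono : (2 * Real.exp 1 : ℝ) ^ s ≤ (2 * Real.exp 1) ^ (k * s) :=
    pow_le_pow_right₀ h2e (Nat.le_mul_of_pos_left s hk)
  calc (((((H.powersetCard s).filter
      (fun U => ∀ a ∈ U, ∀ b ∈ U, a ≠ b → Disjoint a b)).image (fun U => U.sup id)).card : ℝ))
        * (p / L) ^ (k * s)
      ≤ (m.choose s : ℝ) * (p / L) ^ (k * s) :=
        mul_le_mul_of_nonneg_right hcount (by positivity)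
    _ = (m.choose s : ℝ) * (((r : ℝ) / m) ^ s) / L ^ (k * s) := by
        rw [hpk, mul_div_assoc]
    _ ≤ (2 * Real.exp 1) ^ s / L ^ (k * s) := by gcongr
    _ ≤ (2 * Real.exp 1) ^ (k * s) / L ^ (k * s) :=
        div_le_div_of_nonneg_right hmono (by positivity)
    _ = (2 * Real.exp 1 / L) ^ (k * s) := by rw [div_pow]
end

section
/- Let H = H^{(k)}(n,m) be a uniformly random k-uniform hypergraph with m edges on an n-element set X, let r ≤ m, p = (r/m)^{1/k}, and let k+1 ≤ j ≤ kr − ⌈r/2⌉ with np/j > e². Define G_j as the set of j-element subsets S of X containing at least r edges of H, and w(G_j, p/L) = |G_j|·(p/L)^j. Then E[w(G_j, p/L)] ≤ (e²/L)^j · (ej/(np))^{⌈r/2⌉} ≤ (e²/L)^j. -/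
open Finset Nat

lemma desc_mul_aux {a b : ℕ} (h : a ≤ b) (t : ℕ) :
    a.descFactorial t * b ^ t ≤ b.descFactorial t * a ^ t := by
  induction t with
  | zero => simp
  | succ t ih =>
    rw [Nat.descFactorial_succ, Nat.descFactorial_succ, pow_succ, pow_succ]
    have h1 : (a - t) * b ≤ (b - t) * a := by
      rw [Nat.sub_mul, Nat.sub_mul, Nat.mul_comm a b]
      exact Nat.sub_le_sub_left (Nat.mul_le_mul_left t h) _
    calc (a - t) * a.descFactorial t * (b ^ t * b)
        = ((a - t) * b) * (a.descFactorial t * b ^ t) := by ring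
      _ ≤ ((b - t) * a) * (b.descFactorial t * a ^ t) := Nat.mul_le_mul h1 ih
      _ = (b - t) * b.descFactorial t * (a ^ t * a) := by ring

lemma choose_ratio {a b : ℕ} (h : a ≤ b) (t : ℕ) :
    a.choose t * b ^ t ≤ b.choose t * a ^ t := by
  have h0 := desc_mul_aux h t
  rw [Nat.descFactorial_eq_factorial_mul_choose, Nat.descFactorial_eq_factorial_mul_choose] at h0
  have h2 : t ! * (a.choose t * b ^ t) ≤ t ! * (b.choose t * a ^ t) := by
    calc t ! * (a.choose t * b ^ t) = t ! * a.choose t * b ^ t := by ring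
      _ ≤ t ! * b.choose t * a ^ t := h0
      _ = t ! * (b.choose t * a ^ t) := by ring
  exact Nat.le_of_mul_le_mul_left h2 t.factorial_pos

lemma choose_sdiff_le {N m r : ℕ} (h1 : r ≤ m) (h2 : m ≤ N) :
    (N - r).choose (m - r) * N ^ r ≤ N.choose m * m ^ r := by
  have hid := Nat.choose_mul (n := N) h1
  have hNr : 0 < N.choose r := Nat.choose_pos (h1.trans h2)
  have key : N.choose r * ((N - r).choose (m - r) * N ^ r)
      ≤ N.choose r * (N.choose m * m ^ r) := by
    calc N.choose r * ((N - r).choose (m - r) * N ^ r)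
        = (N.choose m * m.choose r) * N ^ r := by rw [hid]; ring
      _ = N.choose m * (m.choose r * N ^ r) := by ring
      _ ≤ N.choose m * (N.choose r * m ^ r) := Nat.mul_le_mul_left _ (choose_ratio h2 r)
      _ = N.choose r * (N.choose m * m ^ r) := by ring
  exact Nat.le_of_mul_le_mul_left key hNr

lemma pow_self_le_fact_mul_exp (t : ℕ) : (t : ℝ) ^ t ≤ (t ! : ℝ) * Real.exp 1 ^ t := by
  have h1 : (t : ℝ) ^ t / t ! ≤ Real.exp t := by
    refine le_trans ?_ (Real.sum_le_exp_of_nonneg (by positivity) (t + 1))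
    exact Finset.single_le_sum (f := fun i => (t : ℝ) ^ i / i !)
      (fun i _ => by positivity) (Finset.self_mem_range_succ t)
  rw [← Real.exp_one_rpow (t : ℝ), Real.rpow_natCast] at h1
  have ht : (0 : ℝ) < t ! := by positivity
  calc (t : ℝ) ^ t = (t : ℝ) ^ t / t ! * t ! := by field_simp
    _ ≤ Real.exp 1 ^ t * t ! := mul_le_mul_of_nonneg_right h1 ht.le
    _ = (t ! : ℝ) * Real.exp 1 ^ t := by ring

lemma choose_le_e_bound (a : ℕ) {t : ℕ} (ht : 1 ≤ t) :
    (a.choose t : ℝ) ≤ (Real.exp 1 * a / t) ^ t := by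
  have h1 : (a.choose t : ℝ) * (t ! : ℕ) ≤ (a : ℝ) ^ t := by
    have h0 := Nat.descFactorial_le_pow a t
    rw [Nat.descFactorial_eq_factorial_mul_choose, mul_comm] at h0
    exact_mod_cast h0
  have ht0 : (0 : ℝ) < t := by exact_mod_cast ht
  have h2 := pow_self_le_fact_mul_exp t
  rw [div_pow, mul_pow, le_div_iff₀ (by positivity)]
  calc (a.choose t : ℝ) * (t : ℝ) ^ t ≤ (a.choose t : ℝ) * ((t ! : ℝ) * Real.exp 1 ^ t) :=
        mul_le_mul_of_nonneg_left h2 (by positivity)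
    _ = ((a.choose t : ℝ) * t !) * Real.exp 1 ^ t := by ring
    _ ≤ (a : ℝ) ^ t * Real.exp 1 ^ t := mul_le_mul_of_nonneg_right h1 (by positivity)
    _ = Real.exp 1 ^ t * (a : ℝ) ^ t := by ring

lemma filter_superset_card {α : Type*} [DecidableEq α] {K R : Finset α} (hR : R ⊆ K) (m : ℕ)
    (hrm : R.card ≤ m) :
    ((K.powersetCard m).filter (fun H => R ⊆ H)).card
      = (K.card - R.card).choose (m - R.card) := by
  rw [← Finset.card_sdiff_of_subset hR, ← Finset.card_powersetCard]
  apply Finset.card_bij' (fun H _ => H \ R) (fun D _ => D ∪ R)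
  · intro H hH
    rcases Finset.mem_filter.mp hH with ⟨hHK, hRH⟩
    rcases Finset.mem_powersetCard.mp hHK with ⟨hHsub, hHcard⟩
    rw [Finset.mem_powersetCard]
    exact ⟨Finset.sdiff_subset_sdiff hHsub le_rfl, by rw [Finset.card_sdiff_of_subset hRH, hHcard]⟩
  · intro D hD
    rcases Finset.mem_powersetCard.mp hD with ⟨hDsub, hDcard⟩
    have hdisj : Disjoint D R := Finset.disjoint_left.mpr fun a ha =>
      (Finset.mem_sdiff.mp (hDsub ha)).2
    rw [Finset.mem_filter, Finset.mem_powersetCard]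
    refine ⟨⟨Finset.union_subset (hDsub.trans Finset.sdiff_subset) hR, ?_⟩,
      Finset.subset_union_right⟩
    rw [Finset.card_union_of_disjoint hdisj, hDcard]
    omega
  · intro H hH
    exact Finset.sdiff_union_of_subset (Finset.mem_filter.mp hH).2
  · intro D hD
    rcases Finset.mem_powersetCard.mp hD with ⟨hDsub, _⟩
    have hdisj : Disjoint D R := Finset.disjoint_left.mpr fun a ha =>
      (Finset.mem_sdiff.mp (hDsub ha)).2
    exact Finset.union_sdiff_cancel_right hdisj

lemma final_core {E x : ℝ} (hE : 1 < E) (hx : E ^ 2 ≤ x) {j r s b : ℕ}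
    (hjs : j + s ≤ b) (hrb : r ≤ b) :
    E ^ (j + r) * x ^ (j + s) ≤ E ^ (2 * j + s) * x ^ b := by
  have hE0 : (0 : ℝ) < E := lt_trans one_pos hE
  have hx0 : (0 : ℝ) < x := lt_of_lt_of_le (by positivity) hx
  calc E ^ (j + r) * x ^ (j + s)
      ≤ (E ^ (2 * j + s) * (E ^ 2) ^ (b - (j + s))) * x ^ (j + s) := by
        apply mul_le_mul_of_nonneg_right _ (by positivity)
        rw [← pow_mul, ← pow_add]
        exact pow_le_pow_right₀ hE.le (by omega)
    _ = E ^ (2 * j + s) * ((E ^ 2) ^ (b - (j + s)) * x ^ (j + s)) := by ring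
    _ ≤ E ^ (2 * j + s) * (x ^ (b - (j + s)) * x ^ (j + s)) := by
        apply mul_le_mul_of_nonneg_left _ (by positivity)
        exact mul_le_mul_of_nonneg_right (pow_le_pow_left₀ (by positivity) hx _) (by positivity)
    _ = E ^ (2 * j + s) * x ^ b := by rw [← pow_add]; congr 2; omega

lemma final_analytic {E x L : ℝ} (hE : 1 < E) (hx : E ^ 2 < x) (hL : 0 < L)
    {j r k s : ℕ} (hjs : j + s ≤ k * r) (hrb : r ≤ k * r) :
    (E * x / L) ^ j * (E / x ^ k) ^ r ≤ (E ^ 2 / L) ^ j * (E / x) ^ s := by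
  have hE0 : (0 : ℝ) < E := lt_trans one_pos hE
  have hx0 : (0 : ℝ) < x := lt_trans (by positivity) hx
  rw [div_pow, div_pow, div_pow, div_pow]
  rw [div_mul_div_comm ((E * x) ^ j) (L ^ j) (E ^ r) ((x ^ k) ^ r),
    div_mul_div_comm ((E ^ 2) ^ j) (L ^ j) (E ^ s) (x ^ s),
    div_le_div_iff₀ (by positivity) (by positivity)]
  calc (E * x) ^ j * E ^ r * (L ^ j * x ^ s)
      = L ^ j * (E ^ (j + r) * x ^ (j + s)) := by
        rw [mul_pow, pow_add, pow_add]; ring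
    _ ≤ L ^ j * (E ^ (2 * j + s) * x ^ (k * r)) :=
        mul_le_mul_of_nonneg_left (final_core hE hx.le hjs hrb) (by positivity)
    _ = (E ^ 2) ^ j * E ^ s * (L ^ j * (x ^ k) ^ r) := by
        rw [← pow_mul E 2 j, ← pow_mul x k r, pow_add]; ring

set_option maxHeartbeats 2000000 in
/-- Expected weight of `G_j` for `np/j > e²`: let `H` be a uniformly random `m`-edge
`k`-uniform hypergraph on an `n`-set `X`, `r ≤ m ≤ C(n,k)`, `p = (r/m)^{1/k}`,
`k+1 ≤ j ≤ kr − ⌈r/2⌉`, `L > 0`, and `np/j > e²`. With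
`G_j(H) = {S ∈ binom(X,j) : S contains ≥ r edges of H}` and
`w(G_j, p/L) = |G_j|·(p/L)^j`, we have
`E[w(G_j, p/L)] ≤ (e²/L)^j·(ej/(np))^{⌈r/2⌉} ≤ (e²/L)^j`,
the expectation being written as a sum over all `m`-edge hypergraphs divided by
their number. -/
theorem expected_weight_Gj_bound {X : Type*} [Fintype X] [DecidableEq X]
    (n m k r j : ℕ) (hn : Fintype.card X = n) (hk : 1 ≤ k) (hr : 1 ≤ r)
    (hrm : r ≤ m) (hmC : m ≤ n.choose k) (hj1 : k + 1 ≤ j) (hj2 : j ≤ k * r - (r + 1) / 2)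
    (L : ℝ) (hL : 0 < L)
    (hnp : Real.exp 1 ^ 2 < (n : ℝ) * (((r : ℝ) / m) ^ ((1 : ℝ) / k)) / j) :
    (∑ H ∈ ((Finset.univ : Finset X).powersetCard k).powersetCard m,
          ((((Finset.univ : Finset X).powersetCard j).filter
              (fun S => r ≤ (H.filter (fun T => T ⊆ S)).card)).card : ℝ) *
            (((r : ℝ) / m) ^ ((1 : ℝ) / k) / L) ^ j)
        ≤ (Real.exp 1 ^ 2 / L) ^ j *
            (Real.exp 1 * j / ((n : ℝ) * (((r : ℝ) / m) ^ ((1 : ℝ) / k)))) ^ ((r + 1) / 2) *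
            ((((Finset.univ : Finset X).powersetCard k).powersetCard m).card : ℝ) ∧
      (Real.exp 1 ^ 2 / L) ^ j *
          (Real.exp 1 * j / ((n : ℝ) * (((r : ℝ) / m) ^ ((1 : ℝ) / k)))) ^ ((r + 1) / 2)
        ≤ (Real.exp 1 ^ 2 / L) ^ j := by
  classical
  set E : ℝ := Real.exp 1 with hEdef
  set p : ℝ := ((r : ℝ) / m) ^ ((1 : ℝ) / k) with hpdef
  set K : Finset (Finset X) := (Finset.univ : Finset X).powersetCard k with hKdef
  set A : Finset (Finset (Finset X)) := K.powersetCard m with hAdef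
  set N : ℕ := n.choose k with hNdef
  set s : ℕ := (r + 1) / 2 with hsdef
  -- basic numeric facts
  have hm1 : 1 ≤ m := hr.trans hrm
  have hE1 : (1 : ℝ) < E := by
    have := Real.exp_one_gt_d9; rw [hEdef]; linarith
  have hE0 : (0 : ℝ) < E := lt_trans one_pos hE1
  have hj0 : 0 < j := by omega
  have hjR : (0 : ℝ) < j := by exact_mod_cast hj0
  have hrR : (0 : ℝ) < r := by exact_mod_cast hr
  have hmR : (0 : ℝ) < m := by exact_mod_cast hm1
  have hkR : (0 : ℝ) < k := by exact_mod_cast hk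
  have hrm' : (r : ℝ) / m ≤ 1 := by
    rw [div_le_one hmR]; exact_mod_cast hrm
  have hrm0 : (0 : ℝ) < (r : ℝ) / m := by positivity
  have hp0 : (0 : ℝ) < p := by rw [hpdef]; exact Real.rpow_pos_of_pos hrm0 _
  have hp1 : p ≤ 1 := by rw [hpdef]; exact Real.rpow_le_one hrm0.le hrm' (by positivity)
  have hpk : p ^ k = (r : ℝ) / m := by
    rw [hpdef, ← Real.rpow_natCast (((r : ℝ) / m) ^ ((1 : ℝ) / k)) k,
      ← Real.rpow_mul hrm0.le, one_div, inv_mul_cancel₀ (ne_of_gt hkR), Real.rpow_one]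
  have hn0 : 0 < n := by
    by_contra h
    have hn0' : n = 0 := by omega
    rw [hn0'] at hnp
    norm_num at hnp
    nlinarith [sq_nonneg E]
  have hnR : (0 : ℝ) < n := by exact_mod_cast hn0
  set x : ℝ := (n : ℝ) * p / j with hxdef
  have hx : E ^ 2 < x := hnp
  have hx0 : (0 : ℝ) < x := lt_trans (by positivity) hx
  have hkn : k ≤ n := by
    by_contra h
    have hNz : N = 0 := by rw [hNdef, Nat.choose_eq_zero_of_lt (by omega)]
    omega
  have hNpos : 0 < N := Nat.choose_pos hkn
  have hjn : j ≤ n := by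
    have h1 : x ≤ (n : ℝ) / j := by
      rw [hxdef, div_le_div_iff₀ (by positivity) hjR]
      nlinarith [mul_nonneg hnR.le hjR.le]
    have h2 : (1 : ℝ) < (n : ℝ) / j := lt_of_lt_of_le (lt_trans (by nlinarith) hx) h1
    rw [lt_div_iff₀ hjR, one_mul] at h2
    exact_mod_cast h2.le
  have hjs : j + s ≤ k * r := by
    have hb : r ≤ k * r := Nat.le_mul_of_pos_left r hk
    omega
  have hrb : r ≤ k * r := Nat.le_mul_of_pos_left r hk
  -- cardinalities
  have hKcard : K.card = N := by rw [hKdef, Finset.card_powersetCard, Finset.card_univ, hn, hNdef]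
  have hAcard : A.card = N.choose m := by rw [hAdef, Finset.card_powersetCard, hKcard]
  -- counting step: for each S of size j
  have key_count : ∀ S ∈ (Finset.univ : Finset X).powersetCard j,
      (A.filter (fun H => r ≤ (H.filter (fun T => T ⊆ S)).card)).card
        ≤ (j.choose k).choose r * (N - r).choose (m - r) := by
    intro S hS
    obtain ⟨-, hScard⟩ := Finset.mem_powersetCard.mp hS
    have hsubset : A.filter (fun H => r ≤ (H.filter (fun T => T ⊆ S)).card) ⊆
        ((S.powersetCard k).powersetCard r).biUnion (fun R => A.filter (fun H => R ⊆ H)) := by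
      intro H hH
      obtain ⟨hHA, hHr⟩ := Finset.mem_filter.mp hH
      obtain ⟨R, hRsub, hRcard⟩ := Finset.exists_subset_card_eq hHr
      refine Finset.mem_biUnion.mpr ⟨R, ?_,
        Finset.mem_filter.mpr ⟨hHA, hRsub.trans (Finset.filter_subset _ _)⟩⟩
      rw [Finset.mem_powersetCard]
      refine ⟨fun T hT => ?_, hRcard⟩
      obtain ⟨hTH, hTS⟩ := Finset.mem_filter.mp (hRsub hT)
      have hTk : T.card = k := by
        have hTK := (Finset.mem_powersetCard.mp hHA).1 hTH
        exact (Finset.mem_powersetCard.mp hTK).2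
      exact Finset.mem_powersetCard.mpr ⟨hTS, hTk⟩
    calc (A.filter (fun H => r ≤ (H.filter (fun T => T ⊆ S)).card)).card
        ≤ (((S.powersetCard k).powersetCard r).biUnion
            (fun R => A.filter (fun H => R ⊆ H))).card := Finset.card_le_card hsubset
      _ ≤ ∑ R ∈ (S.powersetCard k).powersetCard r, (A.filter (fun H => R ⊆ H)).card :=
          Finset.card_biUnion_le
      _ = ∑ _R ∈ (S.powersetCard k).powersetCard r, (N - r).choose (m - r) := by
          refine Finset.sum_congr rfl fun R hR => ?_
          obtain ⟨hRsub, hRcard⟩ := Finset.mem_powersetCard.mp hR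
          have hRK : R ⊆ K := by
            intro T hT
            have hTm := Finset.mem_powersetCard.mp (hRsub hT)
            exact Finset.mem_powersetCard.mpr ⟨Finset.subset_univ _, hTm.2⟩
          rw [hAdef, filter_superset_card hRK m (by rw [hRcard]; exact hrm), hRcard, hKcard]
      _ = ((S.powersetCard k).powersetCard r).card * (N - r).choose (m - r) := by
          rw [Finset.sum_const, smul_eq_mul]
      _ = (j.choose k).choose r * (N - r).choose (m - r) := by
          rw [Finset.card_powersetCard, Finset.card_powersetCard, hScard]
  -- swap the double sum (at the level of naturals)
  have hswap : ∑ H ∈ A, (((Finset.univ : Finset X).powersetCard j).filter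
        (fun S => r ≤ (H.filter (fun T => T ⊆ S)).card)).card
      = ∑ S ∈ (Finset.univ : Finset X).powersetCard j,
          (A.filter (fun H => r ≤ (H.filter (fun T => T ⊆ S)).card)).card := by
    simp_rw [Finset.card_filter]
    exact Finset.sum_comm
  have hsum_le : ∑ H ∈ A, (((Finset.univ : Finset X).powersetCard j).filter
        (fun S => r ≤ (H.filter (fun T => T ⊆ S)).card)).card
      ≤ n.choose j * ((j.choose k).choose r * (N - r).choose (m - r)) := by
    rw [hswap]
    calc ∑ S ∈ (Finset.univ : Finset X).powersetCard j,
          (A.filter (fun H => r ≤ (H.filter (fun T => T ⊆ S)).card)).card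
        ≤ ∑ _S ∈ (Finset.univ : Finset X).powersetCard j,
            (j.choose k).choose r * (N - r).choose (m - r) := Finset.sum_le_sum key_count
      _ = ((Finset.univ : Finset X).powersetCard j).card *
            ((j.choose k).choose r * (N - r).choose (m - r)) := by
          rw [Finset.sum_const, smul_eq_mul]
      _ = n.choose j * ((j.choose k).choose r * (N - r).choose (m - r)) := by
          rw [Finset.card_powersetCard, Finset.card_univ, hn]
  -- the real-analytic main bound
  have hc0 : (0 : ℝ) ≤ (p / L) ^ j := by positivity
  have b1 : ((n.choose j : ℕ) : ℝ) ≤ (E * n / j) ^ j := choose_le_e_bound n (by omega)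
  have b2 : (((j.choose k).choose r : ℕ) : ℝ) ≤ (E * (j.choose k) / r) ^ r :=
    choose_le_e_bound _ hr
  have b3 : (((N - r).choose (m - r) : ℕ) : ℝ) ≤ (N.choose m : ℝ) * ((m : ℝ) / N) ^ r := by
    have h0 := choose_sdiff_le hrm hmC
    have h0' : (((N - r).choose (m - r) : ℕ) : ℝ) * (N : ℝ) ^ r
        ≤ (N.choose m : ℝ) * (m : ℝ) ^ r := by exact_mod_cast h0
    have hNR : (0 : ℝ) < N := by exact_mod_cast hNpos
    rw [div_pow, ← mul_div_assoc, le_div_iff₀ (by positivity)]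
    exact h0'
  have b4 : ((j.choose k : ℕ) : ℝ) * (n : ℝ) ^ k ≤ (N : ℝ) * (j : ℝ) ^ k := by
    have h0 := choose_ratio hjn k
    rw [hNdef]
    exact_mod_cast h0
  have hNR : (0 : ℝ) < N := by exact_mod_cast hNpos
  -- base inequality : (E*Cjk/r)*(m/N) ≤ E / x^k
  have hxk : x ^ k = (n : ℝ) ^ k * ((r : ℝ) / m) / (j : ℝ) ^ k := by
    rw [hxdef, div_pow, mul_pow, hpk]
  have hm0 : (m : ℝ) ≠ 0 := ne_of_gt hmR
  have hjk0 : (j : ℝ) ^ k ≠ 0 := by positivity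
  have hq : E * (j.choose k : ℝ) / r * ((m : ℝ) / N) ≤ E / x ^ k := by
    rw [hxk, _root_.div_mul_div_comm, div_le_div_iff₀ (by positivity) (by positivity)]
    calc E * ↑(j.choose k) * ↑m * ((n : ℝ) ^ k * ((r : ℝ) / ↑m) / (j : ℝ) ^ k)
        = (E * ↑r / (j : ℝ) ^ k) * ((j.choose k : ℝ) * (n : ℝ) ^ k) := by
          field_simp
      _ ≤ (E * ↑r / (j : ℝ) ^ k) * ((N : ℝ) * (j : ℝ) ^ k) :=
          mul_le_mul_of_nonneg_left b4 (by positivity)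
      _ = E * (↑r * ↑N) := by field_simp
  have hwx : E * ↑j / ((n : ℝ) * p) = E / x := by
    rw [hxdef, _root_.div_div_eq_mul_div]
  have hEx1 : E / x ≤ 1 := by
    rw [div_le_one hx0]
    nlinarith [sq_nonneg (E - 1)]
  constructor
  · calc (∑ H ∈ A, ((((Finset.univ : Finset X).powersetCard j).filter
              (fun S => r ≤ (H.filter (fun T => T ⊆ S)).card)).card : ℝ) * (p / L) ^ j)
        = ((∑ H ∈ A, (((Finset.univ : Finset X).powersetCard j).filter
              (fun S => r ≤ (H.filter (fun T => T ⊆ S)).card)).card : ℕ) : ℝ) * (p / L) ^ j := by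
          rw [← Finset.sum_mul, Nat.cast_sum]
      _ ≤ ((n.choose j * ((j.choose k).choose r * (N - r).choose (m - r)) : ℕ) : ℝ) *
            (p / L) ^ j := mul_le_mul_of_nonneg_right (Nat.cast_le.mpr hsum_le) hc0
      _ = ((n.choose j : ℕ) : ℝ) * ((((j.choose k).choose r : ℕ) : ℝ) *
            (((N - r).choose (m - r) : ℕ) : ℝ)) * (p / L) ^ j := by push_cast; ring
      _ ≤ (E * n / j) ^ j * ((E * (j.choose k) / r) ^ r *
            ((N.choose m : ℝ) * ((m : ℝ) / N) ^ r)) * (p / L) ^ j := by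
          refine mul_le_mul_of_nonneg_right ?_ hc0
          exact mul_le_mul b1 (mul_le_mul b2 b3 (by positivity) (by positivity))
            (by positivity) (by positivity)
      _ = (N.choose m : ℝ) * (((E * n / j) * (p / L)) ^ j *
            ((E * (j.choose k) / r) * ((m : ℝ) / N)) ^ r) := by
          rw [mul_pow, mul_pow]; ring
      _ ≤ (N.choose m : ℝ) * ((E * x / L) ^ j * (E / x ^ k) ^ r) := by
          refine mul_le_mul_of_nonneg_left ?_ (by positivity)
          refine mul_le_mul (le_of_eq ?_) (pow_le_pow_left₀ (by positivity) hq r)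
            (by positivity) (by positivity)
          rw [hxdef]; ring
      _ ≤ (N.choose m : ℝ) * ((E ^ 2 / L) ^ j * (E / x) ^ s) :=
          mul_le_mul_of_nonneg_left (final_analytic hE1 hx hL hjs hrb) (by positivity)
      _ = (E ^ 2 / L) ^ j * (E * ↑j / ((n : ℝ) * p)) ^ s * (A.card : ℝ) := by
          rw [hwx, hAcard]; ring
  · refine mul_le_of_le_one_right (by positivity) ?_
    rw [hwx]
    exact pow_le_one₀ (by positivity) hEx1
end

section
/- Chebyshev-type step: let W be a real random variable with E[W] ≤ (e²/L)^j and Var(W) ≤ (2e/L)^j · E[W]/ln(n), where j ≥ 2 and L ≥ 4e³. Then P(W ≥ (2e³/L)^j) ≤ (1/2)^j / ln(n). -/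
open Finset
set_option maxHeartbeats 1000000 in
open Classical in
/-- Chebyshev-type step: on a finite probability space, if `E[W] ≤ (e²/L)^j` and
`Var(W) ≤ (2e/L)^j·E[W]/ln n`, with `j ≥ 2`, `L ≥ 4e³` and `n ≥ 3`, then
`P(W ≥ (2e³/L)^j) ≤ (1/2)^j / ln n`. -/
theorem chebyshev_step {Ω : Type*} [Fintype Ω]
    (prob : Ω → ℝ) (hnn : ∀ ω, 0 ≤ prob ω) (hsum : ∑ ω, prob ω = 1)
    (W : Ω → ℝ) (n j : ℕ) (hn : 3 ≤ n) (hj : 2 ≤ j)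
    (L : ℝ) (hL : 4 * Real.exp 1 ^ 3 ≤ L)
    (hE : ∑ ω, prob ω * W ω ≤ (Real.exp 1 ^ 2 / L) ^ j)
    (hVar : ∑ ω, prob ω * (W ω - ∑ ω', prob ω' * W ω') ^ 2
        ≤ (2 * Real.exp 1 / L) ^ j * (∑ ω, prob ω * W ω) / Real.log n) :
    (∑ ω ∈ Finset.univ.filter (fun ω => (2 * Real.exp 1 ^ 3 / L) ^ j ≤ W ω), prob ω)
      ≤ ((1 : ℝ) / 2) ^ j / Real.log n := by
  set a := Real.exp 1 with ha
  have ha2 : (2.7182818283:ℝ) < a := Real.exp_one_gt_d9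
  have ha3 : a < 2.7182818286 := Real.exp_one_lt_d9
  have ha0 : (0:ℝ) < a := by linarith
  have hL0 : (0:ℝ) < L := by nlinarith
  set μ := ∑ ω, prob ω * W ω with hμ
  set V := ∑ ω, prob ω * (W ω - μ)^2 with hV
  have hV0 : 0 ≤ V := Finset.sum_nonneg fun ω _ => mul_nonneg (hnn ω) (sq_nonneg _)
  have hlogn : 1 < Real.log n := by
    have h3 : (3:ℝ) ≤ n := by exact_mod_cast hn
    calc (1:ℝ) = Real.log a := (Real.log_exp 1).symm
    _ < Real.log 3 := Real.log_lt_log ha0 (by linarith)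
    _ ≤ Real.log n := Real.log_le_log (by norm_num) h3
  set c := (2*a/L)^j with hc_def
  have hc : (0:ℝ) < c := by positivity
  have hμ0 : 0 ≤ μ := by
    have h0 : (0:ℝ) ≤ c * μ / Real.log n := le_trans hV0 hVar
    rw [le_div_iff₀ (by linarith)] at h0
    by_contra hneg
    push_neg at hneg
    nlinarith [mul_pos hc (by linarith : (0:ℝ) < -μ)]
  set x := (a^3/L)^j with hx_def
  have hx0 : (0:ℝ) < x := by positivity
  have h2j : (2:ℝ)^j = 2*2^(j-1) := by
    rw [← pow_succ']
    congr 1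
    omega
  have h2j' : (2:ℝ)^(j-1) = 2^j/2 := by linarith
  set t := (2:ℝ)^(j-1) * x with ht_def
  have ht0 : (0:ℝ) < t := by positivity
  have hμx : μ ≤ x := by
    refine le_trans hE ?_
    rw [hx_def]
    gcongr <;> nlinarith
  have h2px : (2*a^3/L)^j = 2^j * x := by
    rw [show 2*a^3/L = 2*(a^3/L) by ring, mul_pow, hx_def]
  set S := Finset.univ.filter (fun ω => (2*a^3/L)^j ≤ W ω) with hS
  have hsub : ∀ ω ∈ S, t ≤ W ω - μ := by
    intro ω hω
    have hw : (2*a^3/L)^j ≤ W ω := (Finset.mem_filter.mp hω).2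
    rw [h2px, h2j] at hw
    have h1x : (1:ℝ) ≤ 2^(j-1) := one_le_pow₀ (by norm_num)
    nlinarith [mul_nonneg (by linarith : (0:ℝ) ≤ 2^(j-1)-1) hx0.le]
  have cheb : t^2 * (∑ ω ∈ S, prob ω) ≤ V := by
    calc t^2 * (∑ ω ∈ S, prob ω) = ∑ ω ∈ S, prob ω * t^2 := by
          rw [Finset.mul_sum]; exact Finset.sum_congr rfl fun ω _ => mul_comm _ _
    _ ≤ ∑ ω ∈ S, prob ω * (W ω - μ)^2 :=
        Finset.sum_le_sum fun ω hω =>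
          mul_le_mul_of_nonneg_left (pow_le_pow_left₀ ht0.le (hsub ω hω) 2) (hnn ω)
    _ ≤ V := Finset.sum_le_sum_of_subset_of_nonneg (Finset.filter_subset _ _)
          (fun ω _ _ => mul_nonneg (hnn ω) (sq_nonneg _))
  have e1 : c * x = (2*a^4/L^2)^j := by
    rw [hc_def, hx_def, ← mul_pow]
    congr 1
    field_simp
  have hsq : ((2:ℝ)^j)^2 = 4^j := by
    rw [← pow_mul, mul_comm, pow_mul]; norm_num
  have e2 : ((1:ℝ)/2)^j * t^2 = (2*a^4/L^2)^j * (a^2)^j / 4 := by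
    have hx2 : x^2 = ((a^3/L)^2)^j := by rw [hx_def, ← pow_mul, mul_comm, pow_mul]
    have hm : ((1:ℝ)/2)^j * 4^j = 2^j := by rw [← mul_pow]; norm_num
    have hmm : (2:ℝ)^j * ((a^3/L)^2)^j = (2*a^4/L^2)^j * (a^2)^j := by
      rw [← mul_pow, ← mul_pow]
      congr 1
      field_simp
    calc ((1:ℝ)/2)^j * t^2 = ((1/2)^j * 4^j) * x^2 / 4 := by
          rw [ht_def, h2j']; rw [← hsq]; ring
    _ = (2*a^4/L^2)^j * (a^2)^j / 4 := by rw [hm, hx2, hmm]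
  have h4 : (4:ℝ) ≤ (a^2)^j := by
    have haa : (4:ℝ) ≤ a^2 := by nlinarith
    have h1 : (1:ℝ) ≤ a^2 := by nlinarith
    have hpp : (a^2)^2 ≤ (a^2)^j := by gcongr <;> assumption
    nlinarith
  have hcore : c * x ≤ ((1:ℝ)/2)^j * t^2 := by
    calc c * x = (2*a^4/L^2)^j := e1
    _ ≤ (2*a^4/L^2)^j * ((a^2)^j/4) := le_mul_of_one_le_right (by positivity) (by linarith)
    _ = ((1:ℝ)/2)^j * t^2 := by rw [e2]; ring
  have hV2 : V ≤ c * x / Real.log n := by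
    refine le_trans hVar ?_
    gcongr
  have hP : (∑ ω ∈ S, prob ω) ≤ V / t^2 :=
    (le_div_iff₀ (by positivity)).mpr (by rw [mul_comm]; exact cheb)
  refine le_trans hP (le_trans (by gcongr : V/t^2 ≤ (c*x/Real.log n)/t^2) ?_)
  rw [div_div, div_le_div_iff₀ (by positivity) (by linarith)]
  nlinarith [mul_le_mul_of_nonneg_right hcore (by linarith : (0:ℝ) ≤ Real.log n)]
end
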